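/- arXiv:2503.04855 — 5 statements merged into one kernel-verified Lean document; each statement's English description precedes it below -/
import Mathlib

section
/- Existence and uniqueness of the fluid approximation: for every horizon T ≥ 1, every gap Δ ≥ 0 and every value f(T) > 0 of the exploration function, there exists a unique pair of reals (n⋆_{1,T}, n⋆_{2,T}) with n⋆_{1,T} > 0 and n⋆_{2,T} > 0 satisfying the fluid system (n⋆_{2,T})^{-1/2} − (n⋆_{1,T})^{-1/2} = Δ / f(T) and n⋆_{1,T} + n⋆_{2,T} = T; moreover this solution satisfies n⋆_{2,T} ≤ T/2 ≤ n⋆_{1,T}. -/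
open Real

private lemma fluid_anti (Tr : ℝ) :
    StrictAntiOn (fun x : ℝ => 1 / Real.sqrt x - 1 / Real.sqrt (Tr - x)) (Set.Ioo 0 Tr) := by
  intro x hx y hy hxy
  have hx0 : 0 < x := hx.1
  have hy0 : 0 < y := hy.1
  have hTy : 0 < Tr - y := by linarith [hy.2]
  have hTx : 0 < Tr - x := by linarith [hx.2]
  have h1 : 1 / Real.sqrt y < 1 / Real.sqrt x := by
    apply one_div_lt_one_div_of_lt (Real.sqrt_pos.2 hx0)
    exact Real.sqrt_lt_sqrt hx0.le hxy
  have h2 : 1 / Real.sqrt (Tr - x) < 1 / Real.sqrt (Tr - y) := by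
    apply one_div_lt_one_div_of_lt (Real.sqrt_pos.2 hTy)
    exact Real.sqrt_lt_sqrt hTy.le (by linarith)
  simp only
  linarith

/-- **Existence and uniqueness of the fluid approximation.**
For every horizon `T ≥ 1`, every gap `Δ ≥ 0` and every value `fT > 0` of the exploration
function, there is a unique pair `(n₁, n₂)` of positive reals satisfying the fluid system
`n₂^{-1/2} − n₁^{-1/2} = Δ / fT` and `n₁ + n₂ = T`; moreover this solution satisfies
`n₂ ≤ T/2 ≤ n₁`. -/
theorem fluid_existsUnique (T : ℕ) (hT : 1 ≤ T) (Δ fT : ℝ) (hΔ : 0 ≤ Δ) (hf : 0 < fT) :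
    (∃! p : ℝ × ℝ, 0 < p.1 ∧ 0 < p.2 ∧
        1 / Real.sqrt p.2 - 1 / Real.sqrt p.1 = Δ / fT ∧ p.1 + p.2 = (T : ℝ)) ∧
      ∀ p : ℝ × ℝ, (0 < p.1 ∧ 0 < p.2 ∧
          1 / Real.sqrt p.2 - 1 / Real.sqrt p.1 = Δ / fT ∧ p.1 + p.2 = (T : ℝ)) →
        p.2 ≤ (T : ℝ) / 2 ∧ (T : ℝ) / 2 ≤ p.1 := by
  set Tr : ℝ := (T : ℝ) with hTr
  have hT1 : (1 : ℝ) ≤ Tr := by rw [hTr]; exact_mod_cast hT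
  have hT0 : 0 < Tr := by linarith
  set c : ℝ := Δ / fT with hcdef
  have hc : 0 ≤ c := div_nonneg hΔ hf.le
  set h : ℝ → ℝ := fun x => 1 / Real.sqrt x - 1 / Real.sqrt (Tr - x) with hhdef
  have hanti := fluid_anti Tr
  have hhalf : h (Tr / 2) = 0 := by
    simp only [hhdef]
    have : Tr - Tr / 2 = Tr / 2 := by ring
    rw [this]; ring
  have hhalfmem : Tr / 2 ∈ Set.Ioo 0 Tr := ⟨by linarith, by linarith⟩
  -- choose left endpoint
  set a : ℝ := min (Tr / 2) (1 / (c + 2) ^ 2) with hadef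
  have hc2 : (0:ℝ) < c + 2 := by linarith
  have ha0 : 0 < a := lt_min (by linarith) (by positivity)
  have haT2 : a ≤ Tr / 2 := min_le_left _ _
  have hha : c ≤ h a := by
    have h1 : c + 2 ≤ 1 / Real.sqrt a := by
      have hle : a ≤ 1 / (c + 2) ^ 2 := min_le_right _ _
      have hs : Real.sqrt a ≤ 1 / (c + 2) := by
        rw [show (1:ℝ) / (c + 2) = Real.sqrt ((1 / (c + 2))^2) from
          (Real.sqrt_sq (by positivity)).symm]
        apply Real.sqrt_le_sqrt
        calc a ≤ 1 / (c + 2) ^ 2 := hle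
          _ = (1 / (c + 2)) ^ 2 := by rw [div_pow, one_pow]
      have hs0 : 0 < Real.sqrt a := Real.sqrt_pos.2 ha0
      rw [← one_div_one_div (c + 2)]
      exact one_div_le_one_div_of_le hs0 hs
    have h2 : 1 / Real.sqrt (Tr - a) ≤ 2 := by
      have hge : (1:ℝ) / 4 ≤ Tr - a := by linarith
      have : (1:ℝ) / 2 ≤ Real.sqrt (Tr - a) := by
        rw [show (1:ℝ)/2 = Real.sqrt ((1/2)^2) from (Real.sqrt_sq (by norm_num)).symm]
        apply Real.sqrt_le_sqrt; nlinarith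
      calc 1 / Real.sqrt (Tr - a) ≤ 1 / (1/2) :=
            one_div_le_one_div_of_le (by norm_num) this
        _ = 2 := by norm_num
    simp only [hhdef]
    linarith
  -- continuity on [a, Tr/2]
  have hcont : ContinuousOn h (Set.Icc a (Tr / 2)) := by
    apply ContinuousOn.sub
    · apply ContinuousOn.div continuousOn_const
        (Real.continuous_sqrt.continuousOn)
      intro x hx
      exact (Real.sqrt_pos.2 (lt_of_lt_of_le ha0 hx.1)).ne'
    · apply ContinuousOn.div continuousOn_const
        ((Real.continuous_sqrt.comp (continuous_const.sub continuous_id)).continuousOn)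
      intro x hx
      have : 0 < Tr - x := by have := hx.2; linarith
      exact (Real.sqrt_pos.2 this).ne'
  have hmem : c ∈ Set.Icc (h (Tr / 2)) (h a) := ⟨by rw [hhalf]; exact hc, hha⟩
  obtain ⟨x, hxmem, hxval⟩ := intermediate_value_Icc' haT2 hcont hmem
  have hx0 : 0 < x := lt_of_lt_of_le ha0 hxmem.1
  have hxT2 : x ≤ Tr / 2 := hxmem.2
  have hxIoo : x ∈ Set.Ioo 0 Tr := ⟨hx0, by linarith⟩
  -- the solution
  refine ⟨⟨(Tr - x, x), ⟨by simp only; linarith, hx0, ?_, by simp only; ring⟩, ?_⟩, ?_⟩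
  · simp only
    have : Tr - (Tr - x) = x := by ring
    have := hxval
    simp only [hhdef] at this
    rw [show Tr - x = Tr - x from rfl]
    calc 1 / Real.sqrt x - 1 / Real.sqrt (Tr - x) = c := this
      _ = Δ / fT := rfl
  · rintro ⟨q1, q2⟩ ⟨hq1, hq2, heq, hsum⟩
    simp only at hq1 hq2 heq hsum
    have hq2Ioo : q2 ∈ Set.Ioo 0 Tr := ⟨hq2, by linarith⟩
    have hq2h : h q2 = c := by
      simp only [hhdef]
      have : Tr - q2 = q1 := by linarith
      rw [this]; exact heq
    have : q2 = x := hanti.injOn hq2Ioo hxIoo (show h q2 = h x by rw [hq2h, hxval])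
    subst this
    have : q1 = Tr - q2 := by linarith
    simp [this]
  · rintro ⟨p1, p2⟩ ⟨hp1, hp2, heq, hsum⟩
    simp only at hp1 hp2 heq hsum
    have hp2Ioo : p2 ∈ Set.Ioo 0 Tr := ⟨hp2, by linarith⟩
    have hph : h p2 = c := by
      simp only [hhdef]
      have : Tr - p2 = p1 := by linarith
      rw [this]; exact heq
    have hle : p2 ≤ Tr / 2 := by
      by_contra hgt
      push_neg at hgt
      have h2 : h p2 < h (Tr / 2) := hanti hhalfmem hp2Ioo hgt
      rw [hph, hhalf] at h2
      linarith
    exact ⟨hle, by linarith⟩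
end

section
/- Fluid scaling in the large gap regime: suppose Δ^T ≥ 0 is monotone decreasing in T, f satisfies Assumption 2, and Δ^T = ω(f(T)/√T), i.e. Δ^T √T / f(T) → ∞ as T → ∞. Let (n⋆_{1,T}, n⋆_{2,T}) be the unique positive solution of the fluid system. Then n⋆_{2,T} / (f(T)/Δ^T)² → 1, n⋆_{1,T}/T → 1, and n⋆_{2,T}/n⋆_{1,T} → 0 as T → ∞. -/
open MeasureTheory Filter Real Topology

noncomputable section

/-- Assumption 2: properties of the exploration function. `f` is positive and monotone
increasing with `f(t) = ω(√(log log t))`, and there exists `0 ≤ β < 1/2` such that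
`f(t)/t^β` is decreasing (on `t ≥ 1`). -/
def ExplorationFunction (f : ℕ → ℝ) : Prop :=
  (∀ t, 0 < f t) ∧ Monotone f ∧
    Tendsto (fun t : ℕ => f t / Real.sqrt (Real.log (Real.log t))) atTop atTop ∧
    ∃ β : ℝ, 0 ≤ β ∧ β < 1 / 2 ∧
      AntitoneOn (fun t : ℕ => f t / (t : ℝ) ^ β) (Set.Ici 1)

/-- The fluid system for gap sequence `Δ`, exploration function `f` and candidate
solutions `n1 = n⋆_{1,·}`, `n2 = n⋆_{2,·}` : for all `T ≥ 1`, `n1 T ≥ n2 T > 0`,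
`(n2 T)^{-1/2} − (n1 T)^{-1/2} = Δ T / f T` and `n1 T + n2 T = T`. -/
def FluidSolution (Δ f n1 n2 : ℕ → ℝ) : Prop :=
  ∀ T, 1 ≤ T → 0 < n2 T ∧ n2 T ≤ n1 T ∧
    1 / Real.sqrt (n2 T) - 1 / Real.sqrt (n1 T) = Δ T / f T ∧ n1 T + n2 T = (T : ℝ)

/-- **Fluid scaling in the large gap regime.** If `Δ^T ≥ 0` is monotone decreasing,
`f` satisfies Assumption 2, and `Δ^T √T / f(T) → ∞`, then the unique positive solution
`(n⋆_{1,T}, n⋆_{2,T})` of the fluid system satisfies `n⋆_{2,T} / (f(T)/Δ^T)² → 1`,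
`n⋆_{1,T}/T → 1` and `n⋆_{2,T}/n⋆_{1,T} → 0`. -/
theorem fluid_scaling_large_gap (Δ f n1 n2 : ℕ → ℝ)
    (hΔ0 : ∀ T, 0 ≤ Δ T) (hΔanti : Antitone Δ)
    (hf : ExplorationFunction f)
    (hlarge : Tendsto (fun T : ℕ => Δ T * Real.sqrt T / f T) atTop atTop)
    (hfluid : FluidSolution Δ f n1 n2) :
    Tendsto (fun T : ℕ => n2 T / (f T / Δ T) ^ 2) atTop (𝓝 1) ∧
      Tendsto (fun T : ℕ => n1 T / (T : ℝ)) atTop (𝓝 1) ∧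
      Tendsto (fun T : ℕ => n2 T / n1 T) atTop (𝓝 0) := by
  obtain ⟨hf', -, -, -⟩ := hf
  have hf : ∀ t, 0 < f t := hf'
  have hfluid' : ∀ T : ℕ, 1 ≤ T → 0 < n2 T ∧ n2 T ≤ n1 T ∧
      1 / Real.sqrt (n2 T) - 1 / Real.sqrt (n1 T) = Δ T / f T ∧ n1 T + n2 T = (T : ℝ) := hfluid
  have hfluid := hfluid'

  have hΔpos : ∀ᶠ T : ℕ in atTop, 0 < Δ T := by
    filter_upwards [hlarge.eventually_gt_atTop 0] with T h
    rcases (hΔ0 T).lt_or_eq with h' | h'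
    · exact h'
    · simp [← h'] at h
  -- basic facts for T ≥ 1
  have hT1 : ∀ᶠ T : ℕ in atTop, (1:ℝ) ≤ T := by
    filter_upwards [eventually_ge_atTop 1] with T hT
    exact_mod_cast hT
  -- f/(Δ√T) → 0
  have h0 : Tendsto (fun T : ℕ => f T / (Δ T * Real.sqrt T)) atTop (𝓝 0) := by
    have := hlarge.inv_tendsto_atTop
    refine this.congr' ?_
    filter_upwards [hΔpos] with T hΔ
    simp only [Pi.inv_apply]
    rw [inv_div]
  -- n1 ≥ T/2
  have hn1T : ∀ᶠ T : ℕ in atTop, (T:ℝ)/2 ≤ n1 T ∧ 0 < n1 T ∧ 0 < n2 T ∧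
      n1 T + n2 T = (T:ℝ) ∧ 1 / Real.sqrt (n2 T) - 1 / Real.sqrt (n1 T) = Δ T / f T := by
    filter_upwards [eventually_ge_atTop 1, hT1] with T hT hT1'
    obtain ⟨h2, h12, heq, hsum⟩ := hfluid T hT
    have : (T:ℝ)/2 ≤ n1 T := by linarith
    exact ⟨this, lt_of_lt_of_le h2 h12, h2, hsum, heq⟩
  -- f/(Δ√n1) → 0 by squeeze
  have hbf : Tendsto (fun T : ℕ => f T / (Δ T * Real.sqrt (n1 T))) atTop (𝓝 0) := by
    have hub : Tendsto (fun T : ℕ => Real.sqrt 2 * (f T / (Δ T * Real.sqrt T))) atTop (𝓝 0) := by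
      simpa using h0.const_mul (Real.sqrt 2)
    refine tendsto_of_tendsto_of_tendsto_of_le_of_le' tendsto_const_nhds hub ?_ ?_
    · filter_upwards [hΔpos, hn1T] with T hΔ ⟨_, h1, _, _, _⟩
      have := hf T
      positivity
    · filter_upwards [hΔpos, hn1T, hT1] with T hΔ ⟨hhalf, h1, _, _, _⟩ hT1'
      have hsT : (0:ℝ) < Real.sqrt T := Real.sqrt_pos.mpr (by linarith)
      have hs1 : (0:ℝ) < Real.sqrt (n1 T) := Real.sqrt_pos.mpr h1
      have key : Real.sqrt T ≤ Real.sqrt 2 * Real.sqrt (n1 T) := by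
        rw [← Real.sqrt_mul (by norm_num : (0:ℝ) ≤ 2)]
        exact Real.sqrt_le_sqrt (by linarith)
      rw [mul_div_assoc', div_le_div_iff₀ (by positivity) (by positivity)]
      have hk := mul_le_mul_of_nonneg_left key (le_of_lt (mul_pos (hf T) hΔ))
      nlinarith [hk]
  -- (f/Δ)/√n2 → 1
  have hL : Tendsto (fun T : ℕ => (f T / Δ T) / Real.sqrt (n2 T)) atTop (𝓝 1) := by
    have : Tendsto (fun T : ℕ => 1 + f T / (Δ T * Real.sqrt (n1 T))) atTop (𝓝 1) := by
      simpa using tendsto_const_nhds.add hbf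
    refine this.congr' ?_
    filter_upwards [hΔpos, hn1T] with T hΔ ⟨_, h1, h2, _, heq⟩
    have hs1 : (0:ℝ) < Real.sqrt (n1 T) := Real.sqrt_pos.mpr h1
    have hs2 : (0:ℝ) < Real.sqrt (n2 T) := Real.sqrt_pos.mpr h2
    have hfT := hf T
    field_simp at heq ⊢
    nlinarith [heq, hs1, hs2, hfT, hΔ]
  -- √n2/(f/Δ) → 1
  have hLi : Tendsto (fun T : ℕ => Real.sqrt (n2 T) / (f T / Δ T)) atTop (𝓝 1) := by
    have := hL.inv₀ one_ne_zero
    simp only [inv_one] at this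
    refine this.congr' ?_
    filter_upwards [hΔpos] with T hΔ
    rw [inv_div]
  -- goal 1
  have g1 : Tendsto (fun T : ℕ => n2 T / (f T / Δ T) ^ 2) atTop (𝓝 1) := by
    have := hLi.mul hLi
    rw [mul_one] at this
    refine this.congr' ?_
    filter_upwards [hn1T] with T ⟨_, _, h2, _, _⟩
    rw [div_mul_div_comm, Real.mul_self_sqrt h2.le, sq]
  -- n2/T → 0
  have g2 : Tendsto (fun T : ℕ => n2 T / (T:ℝ)) atTop (𝓝 0) := by
    have := g1.mul (h0.mul h0)
    rw [one_mul, zero_mul] at this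
    refine this.congr' ?_
    filter_upwards [hΔpos, hn1T, hT1] with T hΔ ⟨_, _, _, _, _⟩ hT1'
    have hTpos : (0:ℝ) < T := by linarith
    have hsT : Real.sqrt T * Real.sqrt T = (T:ℝ) := Real.mul_self_sqrt hTpos.le
    have hfT := (hf T).ne'
    field_simp
    ring_nf
    rw [Real.sq_sqrt hTpos.le]
  -- n1/T → 1
  have g3 : Tendsto (fun T : ℕ => n1 T / (T:ℝ)) atTop (𝓝 1) := by
    have : Tendsto (fun T : ℕ => 1 - n2 T / (T:ℝ)) atTop (𝓝 1) := by
      simpa using tendsto_const_nhds.sub g2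
    refine this.congr' ?_
    filter_upwards [hn1T, hT1] with T ⟨_, _, _, hsum, _⟩ hT1'
    have hTpos : (0:ℝ) < T := by linarith
    field_simp
    linarith
  -- n2/n1 → 0
  have g4 : Tendsto (fun T : ℕ => n2 T / n1 T) atTop (𝓝 0) := by
    have := g2.div g3 one_ne_zero
    rw [zero_div] at this
    refine this.congr' ?_
    filter_upwards [hn1T, hT1] with T ⟨_, h1, _, _, _⟩ hT1'
    have hTpos : (0:ℝ) < T := by linarith
    simp only [Pi.div_apply]
    field_simp
  exact ⟨g1, g3, g4⟩
end
end

section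
/- Fluid scaling in the small gap regime: suppose Δ^T ≥ 0 is monotone decreasing in T, f satisfies Assumption 2, and Δ^T = o(f(T)/√T), i.e. Δ^T √T / f(T) → 0 as T → ∞. Let (n⋆_{1,T}, n⋆_{2,T}) be the unique positive solution of the fluid system. Then n⋆_{1,T}/(T/2) → 1, n⋆_{2,T}/(T/2) → 1, and n⋆_{2,T}/n⋆_{1,T} → 1 as T → ∞. -/
open MeasureTheory Filter Real Topology

noncomputable section

set_option maxHeartbeats 1000000 in
/-- **Fluid scaling in the small gap regime.** If `Δ^T ≥ 0` is monotone decreasing,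
`f` satisfies Assumption 2, and `Δ^T √T / f(T) → 0`, then the unique positive solution
`(n⋆_{1,T}, n⋆_{2,T})` of the fluid system satisfies `n⋆_{1,T}/(T/2) → 1`,
`n⋆_{2,T}/(T/2) → 1` and `n⋆_{2,T}/n⋆_{1,T} → 1`. -/
theorem fluid_scaling_small_gap (Δ f n1 n2 : ℕ → ℝ)
    (hΔ0 : ∀ T, 0 ≤ Δ T) (hΔanti : Antitone Δ)
    (hf : ExplorationFunction f)
    (hsmall : Tendsto (fun T : ℕ => Δ T * Real.sqrt T / f T) atTop (𝓝 0))
    (hfluid : FluidSolution Δ f n1 n2) :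
    Tendsto (fun T : ℕ => n1 T / ((T : ℝ) / 2)) atTop (𝓝 1) ∧
      Tendsto (fun T : ℕ => n2 T / ((T : ℝ) / 2)) atTop (𝓝 1) ∧
      Tendsto (fun T : ℕ => n2 T / n1 T) atTop (𝓝 1) := by
  have hfpos := hf.1
  -- key pointwise bounds
  have key : ∀ T : ℕ, 1 ≤ T →
      1/2 ≤ n1 T / (T : ℝ) ∧ n1 T / (T : ℝ) ≤ 1/2 + Δ T * Real.sqrt T / f T := by
    intro T hT
    obtain ⟨hb, hba, heq, hsum⟩ := hfluid T hT
    set a := n1 T with ha_def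
    set b := n2 T with hb_def
    have ht : (1 : ℝ) ≤ (T : ℝ) := by exact_mod_cast hT
    have htpos : (0 : ℝ) < T := lt_of_lt_of_le one_pos ht
    have ha : 0 < a := lt_of_lt_of_le hb hba
    have hat : a ≤ (T : ℝ) := by nlinarith
    have hbt : b ≤ (T : ℝ) := by nlinarith
    have hsa : 0 < Real.sqrt a := Real.sqrt_pos.2 ha
    have hsb : 0 < Real.sqrt b := Real.sqrt_pos.2 hb
    have hsat : Real.sqrt a ≤ Real.sqrt (T : ℝ) := Real.sqrt_le_sqrt hat
    have hsbt : Real.sqrt b ≤ Real.sqrt (T : ℝ) := Real.sqrt_le_sqrt hbt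
    have hsa2 : Real.sqrt a * Real.sqrt a = a := Real.mul_self_sqrt ha.le
    have hsb2 : Real.sqrt b * Real.sqrt b = b := Real.mul_self_sqrt hb.le
    have hst2 : Real.sqrt (T : ℝ) * Real.sqrt (T : ℝ) = (T : ℝ) :=
      Real.mul_self_sqrt htpos.le
    have h1 : Real.sqrt a - Real.sqrt b = Real.sqrt a * Real.sqrt b * (Δ T / f T) := by
      rw [← heq]; field_simp
    have hDf : 0 ≤ Δ T / f T := div_nonneg (hΔ0 T) (hfpos T).le
    have hab : a - b ≤ 2 * (T : ℝ) * Real.sqrt (T : ℝ) * (Δ T / f T) := by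
      have : a - b = (Real.sqrt a + Real.sqrt b) * (Real.sqrt a * Real.sqrt b) * (Δ T / f T) := by
        nlinarith [h1]
      rw [this]
      have h2 : Real.sqrt a * Real.sqrt b ≤ (T : ℝ) := by nlinarith
      have h3 : Real.sqrt a + Real.sqrt b ≤ 2 * Real.sqrt (T : ℝ) := by linarith
      have hstpos : 0 < Real.sqrt (T : ℝ) := Real.sqrt_pos.2 htpos
      have h4 : (Real.sqrt a + Real.sqrt b) * (Real.sqrt a * Real.sqrt b)
          ≤ 2 * Real.sqrt (T : ℝ) * (T : ℝ) :=
        mul_le_mul h3 h2 (mul_nonneg hsa.le hsb.le) (by positivity)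
      calc (Real.sqrt a + Real.sqrt b) * (Real.sqrt a * Real.sqrt b) * (Δ T / f T)
          ≤ 2 * Real.sqrt (T : ℝ) * (T : ℝ) * (Δ T / f T) :=
            mul_le_mul_of_nonneg_right h4 hDf
        _ = 2 * (T : ℝ) * Real.sqrt (T : ℝ) * (Δ T / f T) := by ring
    constructor
    · rw [le_div_iff₀ htpos]; nlinarith
    · rw [div_le_iff₀ htpos]
      have hfT : 0 < f T := hfpos T
      have heq2 : Δ T * Real.sqrt (T : ℝ) / f T = Real.sqrt (T : ℝ) * (Δ T / f T) := by
        field_simp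
      rw [heq2]
      calc a ≤ (T : ℝ) / 2 + (T : ℝ) * Real.sqrt (T : ℝ) * (Δ T / f T) := by linarith
        _ = (1 / 2 + Real.sqrt (T : ℝ) * (Δ T / f T)) * (T : ℝ) := by ring
  have hev : ∀ᶠ T : ℕ in atTop, 1 ≤ T := eventually_ge_atTop 1
  -- n1 T / T → 1/2
  have hA : Tendsto (fun T : ℕ => n1 T / (T : ℝ)) atTop (𝓝 (1/2)) := by
    have hub : Tendsto (fun T : ℕ => 1/2 + Δ T * Real.sqrt T / f T) atTop (𝓝 (1/2)) := by
      have := (tendsto_const_nhds (x := (1:ℝ)/2) (f := atTop (α := ℕ))).add hsmall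
      simpa using this
    refine tendsto_of_tendsto_of_tendsto_of_le_of_le' tendsto_const_nhds hub ?_ ?_
    · exact hev.mono fun T hT => (key T hT).1
    · exact hev.mono fun T hT => (key T hT).2
  have h1 : Tendsto (fun T : ℕ => n1 T / ((T : ℝ) / 2)) atTop (𝓝 1) := by
    have : Tendsto (fun T : ℕ => n1 T / (T : ℝ) * 2) atTop (𝓝 1) := by
      have := hA.mul_const (2 : ℝ)
      norm_num at this; exact this
    refine this.congr' ?_
    filter_upwards [hev] with T hT
    have htpos : (0 : ℝ) < T := by exact_mod_cast lt_of_lt_of_le one_pos hT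
    field_simp
  have hB : Tendsto (fun T : ℕ => n2 T / (T : ℝ)) atTop (𝓝 (1/2)) := by
    have : Tendsto (fun T : ℕ => 1 - n1 T / (T : ℝ)) atTop (𝓝 (1/2)) := by
      have := (tendsto_const_nhds (x := (1:ℝ)) (f := atTop (α := ℕ))).sub hA
      norm_num at this; exact this
    refine this.congr' ?_
    filter_upwards [hev] with T hT
    obtain ⟨hb, hba, heq, hsum⟩ := hfluid T hT
    have htpos : (0 : ℝ) < T := by exact_mod_cast lt_of_lt_of_le one_pos hT
    field_simp
    linarith
  have h2 : Tendsto (fun T : ℕ => n2 T / ((T : ℝ) / 2)) atTop (𝓝 1) := by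
    have : Tendsto (fun T : ℕ => n2 T / (T : ℝ) * 2) atTop (𝓝 1) := by
      have := hB.mul_const (2 : ℝ)
      norm_num at this; exact this
    refine this.congr' ?_
    filter_upwards [hev] with T hT
    have htpos : (0 : ℝ) < T := by exact_mod_cast lt_of_lt_of_le one_pos hT
    field_simp
  refine ⟨h1, h2, ?_⟩
  have := h2.div h1 one_ne_zero
  norm_num at this
  refine this.congr' ?_
  filter_upwards [hev] with T hT
  obtain ⟨hb, hba, heq, hsum⟩ := hfluid T hT
  have htpos : (0 : ℝ) < T := by exact_mod_cast lt_of_lt_of_le one_pos hT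
  have ht2 : ((T : ℝ) / 2) ≠ 0 := by positivity
  simp only [Pi.div_apply]
  exact div_div_div_cancel_right₀ ht2 (n2 T) (n1 T)
end
end

section
/- Fluid scaling in the moderate gap regime: suppose Δ^T ≥ 0 is monotone decreasing in T, f satisfies Assumption 2, and Δ^T √T / f(T) → θ as T → ∞ for some constant θ ≥ 0. Let (n⋆_{1,T}, n⋆_{2,T}) be the unique positive solution of the fluid system, and let λ⋆ ∈ (0,1] be the unique solution of √(1 + 1/λ⋆) − √(1 + λ⋆) = θ. Then n⋆_{2,T} / (λ⋆ T/(1+λ⋆)) → 1, n⋆_{1,T} / (T/(1+λ⋆)) → 1, and n⋆_{2,T}/n⋆_{1,T} → λ⋆ as T → ∞. -/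
/-!
Writing `x = n⋆_{2,T} / T`, the fluid system becomes `g x = Δ^T √T / f(T)` with
`g x = x^{-1/2} - (1 - x)^{-1/2}`, and `λ⋆` is defined by `g (λ⋆ / (1 + λ⋆)) = θ`.
Since `g` is strictly decreasing on `(0, 1)`, convergence of `g (n⋆_{2,T} / T)` to `θ`
forces `n⋆_{2,T} / T → λ⋆ / (1 + λ⋆)`, and the three limits are rearrangements of this one.
-/

open MeasureTheory Filter Real Topology

noncomputable section

open Set

theorem StrictAntiOn.tendsto_of_tendsto_comp {ι α β : Type*} [LinearOrder α]
    [TopologicalSpace α] [OrderTopology α] [LinearOrder β] [TopologicalSpace β]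
    [OrderTopology β] {g : α → β} {s : Set α} (hg : StrictAntiOn g s) (hs : s.OrdConnected)
    {l : Filter ι} {u : ι → α} (hu : ∀ᶠ i in l, u i ∈ s) {a : α} (ha : a ∈ s)
    (h : Tendsto (fun i => g (u i)) l (𝓝 (g a))) : Tendsto u l (𝓝 a) := by
  rw [tendsto_order]
  constructor
  · intro b hba
    by_cases hb : b ∈ s
    · filter_upwards [hu, h.eventually (eventually_lt_nhds (hg hb ha hba))] with i hi hgi
      exact (hg.lt_iff_gt hi hb).1 hgi
    · filter_upwards [hu] with i hi
      by_contra! hib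
      exact hb (hs.out hi ha ⟨hib, hba.le⟩)
  · intro b hab
    by_cases hb : b ∈ s
    · filter_upwards [hu, h.eventually (eventually_gt_nhds (hg ha hb hab))] with i hi hgi
      exact (hg.lt_iff_gt hb hi).1 hgi
    · filter_upwards [hu] with i hi
      by_contra! hbi
      exact hb (hs.out ha hi ⟨hab.le, hbi⟩)

def fluidGap (x : ℝ) : ℝ := 1 / √x - 1 / √(1 - x)

theorem fluidGap_strictAntiOn : StrictAntiOn fluidGap (Ioo 0 1) := by
  intro x ⟨hx0, _⟩ y ⟨_, hy1⟩ hxy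
  have hleft : 1 / √y < 1 / √x :=
    one_div_lt_one_div_of_lt (sqrt_pos.2 hx0) (sqrt_lt_sqrt hx0.le hxy)
  have hright : 1 / √(1 - x) < 1 / √(1 - y) :=
    one_div_lt_one_div_of_lt (sqrt_pos.2 (by linarith)) (sqrt_lt_sqrt (by linarith) (by linarith))
  unfold fluidGap
  linarith

theorem fluidGap_div_one_add {lam : ℝ} (hlam : 0 < lam) :
    fluidGap (lam / (1 + lam)) = √(1 + 1 / lam) - √(1 + lam) := by
  have hx : lam / (1 + lam) = (1 + 1 / lam)⁻¹ := by field_simp; ring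
  have hy : 1 - lam / (1 + lam) = (1 + lam)⁻¹ := by field_simp; ring
  rw [fluidGap, hy, hx, sqrt_inv, sqrt_inv, div_inv_eq_mul, div_inv_eq_mul, one_mul, one_mul]

theorem div_one_add_mem_Ioo {lam : ℝ} (hlam : 0 < lam) : lam / (1 + lam) ∈ Ioo 0 1 :=
  ⟨by positivity, (div_lt_one (by positivity)).2 (by linarith)⟩

namespace FluidSolution

variable {Δ f n1 n2 : ℕ → ℝ} {T : ℕ}

theorem n1_eq (hfluid : FluidSolution Δ f n1 n2) (hT : 1 ≤ T) : n1 T = T - n2 T := by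
  linarith [(hfluid T hT).2.2.2]

theorem n2_div_mem_Ioo (hfluid : FluidSolution Δ f n1 n2) (hT : 1 ≤ T) :
    n2 T / T ∈ Ioo 0 1 := by
  obtain ⟨h2pos, h21, -, hsum⟩ := hfluid T hT
  have hT0 : (0 : ℝ) < T := by linarith
  exact ⟨div_pos h2pos hT0, (div_lt_one hT0).2 (by linarith)⟩

theorem fluidGap_n2_div (hfluid : FluidSolution Δ f n1 n2) (hT : 1 ≤ T) :
    fluidGap (n2 T / T) = Δ T * √T / f T := by
  obtain ⟨h2pos, h21, hgap, hsum⟩ := hfluid T hT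
  have hT0 : (0 : ℝ) < T := by linarith
  have h1 : 1 - n2 T / T = n1 T / T := by field_simp; linarith
  rw [fluidGap, h1, sqrt_div h2pos.le, sqrt_div (h2pos.trans_le h21).le, one_div_div,
    one_div_div, mul_div_right_comm, ← hgap]
  ring

theorem tendsto_n2_div {θ lam : ℝ} (hfluid : FluidSolution Δ f n1 n2)
    (hmoderate : Tendsto (fun T : ℕ => Δ T * √T / f T) atTop (𝓝 θ)) (hlam0 : 0 < lam)
    (hlam : √(1 + 1 / lam) - √(1 + lam) = θ) :
    Tendsto (fun T : ℕ => n2 T / T) atTop (𝓝 (lam / (1 + lam))) := by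
  refine fluidGap_strictAntiOn.tendsto_of_tendsto_comp ordConnected_Ioo
    ((eventually_ge_atTop 1).mono fun T hT => hfluid.n2_div_mem_Ioo hT)
    (div_one_add_mem_Ioo hlam0) ?_
  rw [fluidGap_div_one_add hlam0, hlam]
  refine hmoderate.congr' ?_
  filter_upwards [eventually_ge_atTop 1] with T hT
  exact (hfluid.fluidGap_n2_div hT).symm

end FluidSolution

theorem fluid_scaling_moderate_gap_general (Δ f n1 n2 : ℕ → ℝ) (θ lam : ℝ)
    (hmoderate : Tendsto (fun T : ℕ => Δ T * Real.sqrt T / f T) atTop (𝓝 θ))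
    (hlam0 : 0 < lam)
    (hlam : Real.sqrt (1 + 1 / lam) - Real.sqrt (1 + lam) = θ)
    (hfluid : FluidSolution Δ f n1 n2) :
    Tendsto (fun T : ℕ => n2 T / (lam * (T : ℝ) / (1 + lam))) atTop (𝓝 1) ∧
      Tendsto (fun T : ℕ => n1 T / ((T : ℝ) / (1 + lam))) atTop (𝓝 1) ∧
      Tendsto (fun T : ℕ => n2 T / n1 T) atTop (𝓝 lam) := by
  have hshare2 := hfluid.tendsto_n2_div hmoderate hlam0 hlam
  have hshare1 := tendsto_const_nhds (x := (1 : ℝ)).sub hshare2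
  have hne : lam / (1 + lam) ≠ 0 := (div_one_add_mem_Ioo hlam0).1.ne'
  have hne' : 1 - lam / (1 + lam) ≠ 0 := sub_ne_zero.2 (div_one_add_mem_Ioo hlam0).2.ne'
  refine ⟨?_, ?_, ?_⟩
  · have h := hshare2.div_const (lam / (1 + lam))
    rw [div_self hne] at h
    refine h.congr fun T => ?_
    field_simp
  · have h := hshare1.mul_const (1 + lam)
    rw [show (1 - lam / (1 + lam)) * (1 + lam) = 1 by field_simp; ring] at h
    refine h.congr' ?_
    filter_upwards [eventually_ge_atTop 1] with T hT
    have hT0 : (T : ℝ) ≠ 0 := by positivity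
    rw [hfluid.n1_eq hT]
    field_simp
  · have h := hshare2.div hshare1 hne'
    rw [show lam / (1 + lam) / (1 - lam / (1 + lam)) = lam by field_simp; ring] at h
    refine h.congr' ?_
    filter_upwards [eventually_ge_atTop 1] with T hT
    have hT0 : (T : ℝ) ≠ 0 := by positivity
    rw [Pi.div_apply, hfluid.n1_eq hT]
    field_simp

/-- **Fluid scaling in the moderate gap regime.** If `Δ^T ≥ 0` is monotone decreasing,
`f` satisfies Assumption 2, and `Δ^T √T / f(T) → θ` for some `θ ≥ 0`, and `λ⋆ ∈ (0,1]`
solves `√(1 + 1/λ⋆) − √(1 + λ⋆) = θ`, then the unique positive solution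
`(n⋆_{1,T}, n⋆_{2,T})` of the fluid system satisfies `n⋆_{2,T}/(λ⋆T/(1+λ⋆)) → 1`,
`n⋆_{1,T}/(T/(1+λ⋆)) → 1` and `n⋆_{2,T}/n⋆_{1,T} → λ⋆`. -/
theorem fluid_scaling_moderate_gap (Δ f n1 n2 : ℕ → ℝ) (θ lam : ℝ)
    (hΔ0 : ∀ T, 0 ≤ Δ T) (hΔanti : Antitone Δ)
    (hf : ExplorationFunction f)
    (hθ : 0 ≤ θ)
    (hmoderate : Tendsto (fun T : ℕ => Δ T * Real.sqrt T / f T) atTop (𝓝 θ))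
    (hlam0 : 0 < lam) (hlam1 : lam ≤ 1)
    (hlam : Real.sqrt (1 + 1 / lam) - Real.sqrt (1 + lam) = θ)
    (hfluid : FluidSolution Δ f n1 n2) :
    Tendsto (fun T : ℕ => n2 T / (lam * (T : ℝ) / (1 + lam))) atTop (𝓝 1) ∧
      Tendsto (fun T : ℕ => n1 T / ((T : ℝ) / (1 + lam))) atTop (𝓝 1) ∧
      Tendsto (fun T : ℕ => n2 T / n1 T) atTop (𝓝 lam) :=
  fluid_scaling_moderate_gap_general Δ f n1 n2 θ lam hmoderate hlam0 hlam hfluid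
end
end

section
/- Divergence of the fluid approximation: suppose the gap Δ^T ≥ 0 is monotone decreasing in T and uniformly bounded, and f satisfies Assumption 2 (in particular f(T) → ∞). Let (n⋆_{1,T}, n⋆_{2,T}) be the unique positive solution of the fluid system. Then n⋆_{1,T} ≥ n⋆_{2,T} for all T, and both n⋆_{1,T} → ∞ and n⋆_{2,T} → ∞ as T → ∞. -/
open MeasureTheory Filter Real Topology

noncomputable section

theorem my_sqrt_tendsto_atTop : Tendsto Real.sqrt atTop atTop := by
  rw [tendsto_atTop]
  intro b
  filter_upwards [eventually_ge_atTop (b ^ 2)] with x hx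
  calc b ≤ |b| := le_abs_self b
    _ = Real.sqrt (b ^ 2) := (Real.sqrt_sq_eq_abs b).symm
    _ ≤ Real.sqrt x := Real.sqrt_le_sqrt hx

/-- **Divergence of the fluid approximation.** If the gap `Δ^T ≥ 0` is monotone
decreasing and uniformly bounded, and `f` satisfies Assumption 2, then the unique
positive solution of the fluid system satisfies `n⋆_{1,T} ≥ n⋆_{2,T}` for all `T ≥ 1`,
and both `n⋆_{1,T} → ∞` and `n⋆_{2,T} → ∞` as `T → ∞`. -/
theorem fluid_diverges (Δ f n1 n2 : ℕ → ℝ)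
    (hΔ0 : ∀ T, 0 ≤ Δ T) (hΔanti : Antitone Δ) (hΔbdd : ∃ C : ℝ, ∀ T, Δ T ≤ C)
    (hf : ExplorationFunction f)
    (hpos : ∀ T, 1 ≤ T → 0 < n1 T ∧ 0 < n2 T)
    (heq : ∀ T, 1 ≤ T →
      1 / Real.sqrt (n2 T) - 1 / Real.sqrt (n1 T) = Δ T / f T ∧ n1 T + n2 T = (T : ℝ)) :
    (∀ T, 1 ≤ T → n2 T ≤ n1 T) ∧
      Tendsto n1 atTop atTop ∧ Tendsto n2 atTop atTop := by
  obtain ⟨hfpos, hfmono, hflog, -⟩ := hf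
  obtain ⟨C, hC⟩ := hΔbdd
  -- n2 ≤ n1
  have hle : ∀ T, 1 ≤ T → n2 T ≤ n1 T := by
    intro T hT
    obtain ⟨h1, h2⟩ := hpos T hT
    obtain ⟨e1, e2⟩ := heq T hT
    have hΔf : 0 ≤ Δ T / f T := div_nonneg (hΔ0 T) (hfpos T).le
    have hinv : 1 / Real.sqrt (n1 T) ≤ 1 / Real.sqrt (n2 T) := by linarith
    have hs1 : 0 < Real.sqrt (n1 T) := Real.sqrt_pos.2 h1
    have hs2 : 0 < Real.sqrt (n2 T) := Real.sqrt_pos.2 h2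
    have hss : Real.sqrt (n2 T) ≤ Real.sqrt (n1 T) := by
      rw [div_le_div_iff₀ hs1 hs2] at hinv
      linarith
    have hq1 := Real.sq_sqrt h1.le
    have hq2 := Real.sq_sqrt h2.le
    nlinarith
  -- n1 ≥ T/2
  have hn1 : ∀ T : ℕ, 1 ≤ T → (T : ℝ) / 2 ≤ n1 T := by
    intro T hT
    have h := (heq T hT).2
    have h' := hle T hT
    linarith
  have htendn1 : Tendsto n1 atTop atTop := by
    refine tendsto_atTop_mono' atTop ?_ (Tendsto.atTop_div_const two_pos
      tendsto_natCast_atTop_atTop)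
    filter_upwards [eventually_ge_atTop 1] with T hT using hn1 T hT
  -- f → ∞
  have hs_tend : Tendsto (fun t : ℕ => Real.sqrt (Real.log (Real.log t))) atTop atTop :=
    my_sqrt_tendsto_atTop.comp (Real.tendsto_log_atTop.comp
      (Real.tendsto_log_atTop.comp tendsto_natCast_atTop_atTop))
  have hftend : Tendsto f atTop atTop := by
    rw [tendsto_atTop]
    intro b
    filter_upwards [hflog.eventually (eventually_ge_atTop (max b 0)),
      hs_tend.eventually (eventually_ge_atTop 1)] with t h1 h2
    have hs0 : (0:ℝ) < Real.sqrt (Real.log (Real.log t)) := lt_of_lt_of_le one_pos h2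
    have hmul : max b 0 * Real.sqrt (Real.log (Real.log t)) ≤ f t := by
      rw [← le_div_iff₀ hs0]; exact h1
    calc b ≤ max b 0 := le_max_left _ _
      _ = max b 0 * 1 := (mul_one _).symm
      _ ≤ max b 0 * Real.sqrt (Real.log (Real.log t)) :=
          mul_le_mul_of_nonneg_left h2 (le_max_right _ _)
      _ ≤ f t := hmul
  -- bound on 1/√(n2 T)
  set g : ℕ → ℝ := fun T => max C 0 / f T + 1 / Real.sqrt ((T : ℝ) / 2) with hg
  have hgtend : Tendsto g atTop (𝓝 0) := by
    have h1 : Tendsto (fun T : ℕ => max C 0 / f T) atTop (𝓝 0) :=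
      Tendsto.div_atTop tendsto_const_nhds hftend
    have h2 : Tendsto (fun T : ℕ => 1 / Real.sqrt ((T : ℝ) / 2)) atTop (𝓝 0) := by
      simp only [one_div]
      exact (my_sqrt_tendsto_atTop.comp
        (Tendsto.atTop_div_const two_pos tendsto_natCast_atTop_atTop)).inv_tendsto_atTop
    simpa only [add_zero] using h1.add h2
  have hbound : ∀ T : ℕ, 1 ≤ T → 1 / Real.sqrt (n2 T) ≤ g T := by
    intro T hT
    obtain ⟨h1, h2⟩ := hpos T hT
    obtain ⟨e1, e2⟩ := heq T hT
    have hT2 : (0:ℝ) < (T : ℝ) / 2 := by positivity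
    have hsq : Real.sqrt ((T : ℝ) / 2) ≤ Real.sqrt (n1 T) := Real.sqrt_le_sqrt (hn1 T hT)
    have hs1 : 0 < Real.sqrt ((T : ℝ) / 2) := Real.sqrt_pos.2 hT2
    have hinv : 1 / Real.sqrt (n1 T) ≤ 1 / Real.sqrt ((T : ℝ) / 2) :=
      one_div_le_one_div_of_le hs1 hsq
    have hΔle : Δ T / f T ≤ max C 0 / f T :=
      div_le_div_of_nonneg_right ((hC T).trans (le_max_left _ _)) (hfpos T).le
    simp only [hg]
    linarith
  -- 1/√(n2) → 0 within (0, ∞), so √(n2) → ∞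
  have hpos2 : ∀ᶠ T in atTop, (0:ℝ) < 1 / Real.sqrt (n2 T) := by
    filter_upwards [eventually_ge_atTop 1] with T hT
    have := (hpos T hT).2
    positivity
  have hto0 : Tendsto (fun T => 1 / Real.sqrt (n2 T)) atTop (𝓝 0) := by
    refine squeeze_zero' (by filter_upwards [hpos2] with T h using h.le) ?_ hgtend
    filter_upwards [eventually_ge_atTop 1] with T hT using hbound T hT
  have hsqrt_tend : Tendsto (fun T => Real.sqrt (n2 T)) atTop atTop := by
    have h' : Tendsto (fun T => 1 / Real.sqrt (n2 T)) atTop (𝓝[>] 0) :=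
      tendsto_nhdsWithin_of_tendsto_nhds_of_eventually_within _ hto0 hpos2
    have := h'.inv_tendsto_nhdsGT_zero
    refine this.congr' ?_
    filter_upwards [eventually_ge_atTop 1] with T hT
    have h2 := (hpos T hT).2
    have : Real.sqrt (n2 T) ≠ 0 := (Real.sqrt_pos.2 h2).ne'
    simp [one_div, this]
  have htendn2 : Tendsto n2 atTop atTop := by
    refine tendsto_atTop_mono' atTop ?_ hsqrt_tend
    filter_upwards [hsqrt_tend.eventually (eventually_ge_atTop 1),
      eventually_ge_atTop 1] with T h1 hT
    have h2 := (hpos T hT).2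
    have hq := Real.sq_sqrt h2.le
    nlinarith
  exact ⟨hle, htendn1, htendn2⟩
end
end
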